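/- arXiv:1408.2662 — 2 statements merged into one kernel-verified Lean document; each statement's English description precedes it below -/
import Mathlib

section
/- Every prime implicant of the formula T(x,y,z) = ⋀_{i=1}^m (x_i ∨ y_i) ∧ (y_i ∨ z_i) ∧ (x_i ∨ z_i) sets, for each i, exactly two of the three variables x_i, y_i, z_i to 1 and leaves the third free. -/
variable {V : Type*}

abbrev Lit (V : Type*) := V × Bool

def evalLit (α : V → Bool) (l : Lit V) : Bool := α l.1 == l.2

abbrev Clause2 (V : Type*) := Lit V × Lit V
abbrev CNF2 (V : Type*) := List (Clause2 V)
abbrev CNF (V : Type*) := List (List (Lit V))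

def sat2 (α : V → Bool) (F : CNF2 V) : Prop :=
  ∀ c ∈ F, evalLit α c.1 = true ∨ evalLit α c.2 = true

def satCNF (α : V → Bool) (F : CNF V) : Prop :=
  ∀ C ∈ F, ∃ l ∈ C, evalLit α l = true

def kCNF (k : ℕ) (F : CNF V) : Prop := ∀ C ∈ F, C.length ≤ k

def extendsR (α : V → Bool) (ρ : V → Option Bool) : Prop :=
  ∀ v b, ρ v = some b → α v = b

def unfix [DecidableEq V] (ρ : V → Option Bool) (v : V) : V → Option Bool :=
  Function.update ρ v none

def implicant2 (ρ : V → Option Bool) (F : CNF2 V) : Prop :=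
  ∀ α, extendsR α ρ → sat2 α F

def primeImplicant2 [DecidableEq V] (ρ : V → Option Bool) (F : CNF2 V) : Prop :=
  implicant2 ρ F ∧ ∀ v, ρ v ≠ none → ¬ implicant2 (unfix ρ v) F

def partialPI [DecidableEq V] (ρ : V → Option Bool) (F : CNF2 V) : Prop :=
  primeImplicant2 ρ F ∧ ∃ v, ρ v = none

def implicantC (ρ : V → Option Bool) (F : CNF V) : Prop :=
  ∀ α, extendsR α ρ → satCNF α F

def primeImplicantC [DecidableEq V] (ρ : V → Option Bool) (F : CNF V) : Prop :=
  implicantC ρ F ∧ ∀ v, ρ v ≠ none → ¬ implicantC (unfix ρ v) F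

def implicantF (ρ : V → Option Bool) (f : (V → Bool) → Bool) : Prop :=
  ∀ α, extendsR α ρ → f α = true

def primeImplicantF [DecidableEq V] (ρ : V → Option Bool) (f : (V → Bool) → Bool) : Prop :=
  implicantF ρ f ∧ ∀ v, ρ v ≠ none → ¬ implicantF (unfix ρ v) f

def negLit (l : Lit V) : Lit V := (l.1, !l.2)

def edge (F : CNF2 V) (u v : Lit V) : Prop :=
  ∃ c ∈ F, (u = negLit c.1 ∧ v = c.2) ∨ (u = negLit c.2 ∧ v = c.1)

def impliesL (F : CNF2 V) : Lit V → Lit V → Prop := Relation.TransGen (edge F)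

def onCycle (F : CNF2 V) (u : Lit V) : Prop := impliesL F u u

def acyclicD (F : CNF2 V) : Prop := ∀ u, ¬ onCycle F u

def looplessD (F : CNF2 V) : Prop := ∀ u, ¬ edge F u u

def litVal (ρ : V → Option Bool) (l : Lit V) : Option Bool := (ρ l.1).map (· == l.2)

def Aset (ρ : V → Option Bool) : Set (Lit V) := {l | litVal ρ l = some false}
def Bset (ρ : V → Option Bool) : Set (Lit V) := {l | litVal ρ l = some true}
def Cset (ρ : V → Option Bool) : Set (Lit V) := {l | litVal ρ l = none}

def Nminus (F : CNF2 V) (S : Set (Lit V)) : Set (Lit V) :=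
  {u | u ∉ S ∧ ∃ v ∈ S, impliesL F u v}
def Nplus (F : CNF2 V) (S : Set (Lit V)) : Set (Lit V) :=
  {v | v ∉ S ∧ ∃ u ∈ S, impliesL F u v}

def Tfml (m : ℕ) : CNF2 (Fin m × Fin 3) :=
  (List.finRange m).flatMap (fun i =>
    [(((i, 0), true), ((i, 1), true)),
     (((i, 1), true), ((i, 2), true)),
     (((i, 0), true), ((i, 2), true))])

def adjVar (F : CNF2 V) (x y : V) : Prop :=
  x ≠ y ∧ ∃ u v : Lit V, u.1 = x ∧ v.1 = y ∧ (impliesL F u v ∨ impliesL F v u)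

/-! Every clause of `Tfml m` is positive, so a restriction is an implicant exactly when it sets
some variable of each clause to `1`, that is, when in every block at most one of the three
variables is not set to `1`. Freeing that remaining variable keeps this property, so in a prime
implicant it is already free. -/

lemma extendsR_decide_eq_some_true (ρ : V → Option Bool) :
    extendsR (fun v => decide (ρ v = some true)) ρ := by
  rintro v (_ | _) hv <;> simp [hv]

section PositiveTwoCNF

variable {F : CNF2 V} {ρ : V → Option Bool}

lemma implicant2_iff_of_positive (hF : ∀ c ∈ F, c.1.2 = true ∧ c.2.2 = true) :
    implicant2 ρ F ↔ ∀ c ∈ F, ρ c.1.1 = some true ∨ ρ c.2.1 = some true := by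
  constructor
  · intro himp c hc
    simpa [evalLit, hF c hc] using himp _ (extendsR_decide_eq_some_true ρ) c hc
  · intro hρ α hα c hc
    rcases hρ c hc with h | h <;> simp [evalLit, hF c hc, hα _ _ h]

end PositiveTwoCNF

lemma exists_forall_ne_eq_iff_fin_three {α : Type*} (f : Fin 3 → α) (a : α) :
    (∃ j, ∀ j' ≠ j, f j' = a) ↔
      (f 0 = a ∨ f 1 = a) ∧ (f 1 = a ∨ f 2 = a) ∧ (f 0 = a ∨ f 2 = a) := by
  simp only [ne_eq, Fin.forall_fin_succ, Fin.isValue, Fin.succ_zero_eq_one, Fin.succ_one_eq_two,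
    IsEmpty.forall_iff, and_true, Fin.exists_fin_succ, not_true_eq_false, one_ne_zero,
    not_false_eq_true, forall_const, Fin.reduceEq, true_and, zero_ne_one, IsEmpty.exists_iff,
    or_false]
  tauto

lemma implicant2_Tfml_iff {m : ℕ} {ρ : Fin m × Fin 3 → Option Bool} :
    implicant2 ρ (Tfml m) ↔ ∀ i, ∃ j : Fin 3, ∀ j' ≠ j, ρ (i, j') = some true := by
  rw [implicant2_iff_of_positive (by simp [Tfml])]
  simp only [Tfml, List.forall_mem_flatMap, List.mem_finRange, List.forall_mem_cons, forall_const]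
  refine forall_congr' fun i => ?_
  simp only [List.not_mem_nil, IsEmpty.forall_iff, implies_true, and_true]
  rw [exists_forall_ne_eq_iff_fin_three (fun j => ρ (i, j))]

lemma implicant2_unfix_Tfml {m : ℕ} {ρ : Fin m × Fin 3 → Option Bool}
    (himp : implicant2 ρ (Tfml m)) {i : Fin m} {j : Fin 3}
    (hj : ∀ j' ≠ j, ρ (i, j') = some true) :
    implicant2 (unfix ρ (i, j)) (Tfml m) := by
  rw [implicant2_Tfml_iff] at himp ⊢
  intro i'
  by_cases hi : i' = i
  · subst hi
    exact ⟨j, fun j' hj' => by simp [unfix, hj', hj j' hj']⟩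
  · obtain ⟨k, hk⟩ := himp i'
    exact ⟨k, fun j' hj' => by simp [unfix, hi, hk j' hj']⟩

theorem Tfml_prime_implicant_structure (m : ℕ) (ρ : Fin m × Fin 3 → Option Bool)
    (h : primeImplicant2 ρ (Tfml m)) :
    ∀ i : Fin m, ∃ j : Fin 3, ρ (i, j) = none ∧ ∀ j' : Fin 3, j' ≠ j → ρ (i, j') = some true := by
  obtain ⟨himp, hprime⟩ := h
  intro i
  obtain ⟨j, hj⟩ := implicant2_Tfml_iff.1 himp i
  refine ⟨j, ?_, hj⟩
  by_contra hfixed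
  exact hprime (i, j) hfixed (implicant2_unfix_Tfml himp hj)
end

section
/- Let F be a 2-CNF whose implication digraph is acyclic and let n be the number of variables. Then the number of partial prime implicants of F is at most 3^{n/3}. -/
variable {V : Type*}

section MoonMoser
open Finset
variable {α : Type*} [Fintype α] [DecidableEq α]

noncomputable def MISset (G : SimpleGraph α) (W : Finset α) : Finset (Finset α) :=
  @Finset.filter _ (fun s => s ⊆ W ∧ (∀ x ∈ s, ∀ y ∈ s, ¬ G.Adj x y) ∧
    ∀ w ∈ W, w ∉ s → ∃ y ∈ s, G.Adj w y) (fun _ => Classical.propDecidable _) Finset.univ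

lemma mem_MISset {G : SimpleGraph α} {W s : Finset α} :
    s ∈ MISset G W ↔ s ⊆ W ∧ (∀ x ∈ s, ∀ y ∈ s, ¬ G.Adj x y) ∧
      ∀ w ∈ W, w ∉ s → ∃ y ∈ s, G.Adj w y := by
  simp [MISset, Finset.mem_filter]

lemma nat_cube_le_three_pow : ∀ k : ℕ, k ^ 3 ≤ 3 ^ k := by
  intro k
  induction k with
  | zero => norm_num
  | succ k ih =>
    match k, ih with
    | 0, _ => norm_num
    | 1, _ => norm_num
    | 2, _ => norm_num
    | (m+3), ih =>
      have h1 : (m+3+1)^3 ≤ 3 * (m+3)^3 := by nlinarith [Nat.zero_le (m^3), Nat.zero_le (m^2), Nat.zero_le m]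
      have h2 : 3 * (m+3)^3 ≤ 3 * 3^(m+3) := by omega
      have h3 : 3 * 3^(m+3) = 3^(m+3+1) := by ring
      omega

lemma nat_le_rpow (k : ℕ) : (k : ℝ) ≤ (3:ℝ) ^ ((k : ℝ)/3) := by
  have h0 : (0:ℝ) ≤ (k:ℝ) := Nat.cast_nonneg k
  have hc : ((k:ℝ)) ^ (3:ℕ) ≤ (3:ℝ) ^ (k:ℕ) := by exact_mod_cast nat_cube_le_three_pow k
  have hc' : ((k:ℝ)) ^ ((3:ℕ):ℝ) ≤ (3:ℝ) ^ ((k:ℕ):ℝ) := by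
    rw [Real.rpow_natCast, Real.rpow_natCast]; exact hc
  have h1 := Real.rpow_le_rpow (Real.rpow_nonneg h0 _) hc' (by norm_num : (0:ℝ) ≤ 1/3)
  have l1 : (((k:ℝ)) ^ ((3:ℕ):ℝ)) ^ ((1:ℝ)/3) = (k:ℝ) := by
    rw [← Real.rpow_mul h0]; norm_num
  have l2 : ((3:ℝ) ^ ((k:ℕ):ℝ)) ^ ((1:ℝ)/3) = (3:ℝ) ^ ((k:ℝ)/3) := by
    rw [← Real.rpow_mul (by norm_num : (0:ℝ) ≤ 3)]
    congr 1; ring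
  rw [l1, l2] at h1; exact h1

lemma MM (G : SimpleGraph α) : ∀ W : Finset α,
    ((MISset G W).card : ℝ) ≤ (3:ℝ) ^ ((W.card : ℝ)/3) := by
  classical
  intro W
  induction W using Finset.strongInductionOn with
  | _ W IH =>
  rcases W.eq_empty_or_nonempty with rfl | hne
  · have hsub : MISset G ∅ ⊆ {∅} := by
      intro s hs
      rw [mem_MISset] at hs
      simp [Finset.subset_empty.mp hs.1]
    have : (MISset G ∅).card ≤ 1 := le_trans (Finset.card_le_card hsub) (by simp)
    calc ((MISset G ∅).card : ℝ) ≤ 1 := by exact_mod_cast this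
      _ ≤ _ := by norm_num
  · obtain ⟨v, hvW, hvmin⟩ := Finset.exists_min_image W (fun u => (W.filter (G.Adj u)).card) hne
    set d := (W.filter (G.Adj v)).card with hd
    set N : Finset α := insert v (W.filter (G.Adj v)) with hN
    have hNW : N ⊆ W := by
      intro x hx
      rcases Finset.mem_insert.mp hx with rfl | hx
      · exact hvW
      · exact (Finset.mem_filter.mp hx).1
    have hNcard : N.card = d + 1 := by
      rw [hN, Finset.card_insert_of_notMem (by simp)]
    have hcover : MISset G W ⊆ N.biUnion (fun u => (MISset G W).filter (fun s => u ∈ s)) := by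
      intro s hs
      have hs' := mem_MISset.mp hs
      by_contra hc
      simp only [Finset.mem_biUnion, Finset.mem_filter, not_exists, not_and] at hc
      have hni : ∀ u ∈ N, u ∉ s := fun u hu hus => hc u hu hs hus
      have hvs : v ∉ s := hni v (Finset.mem_insert_self _ _)
      obtain ⟨y, hys, hadj⟩ := hs'.2.2 v hvW hvs
      exact hni y (Finset.mem_insert_of_mem (Finset.mem_filter.mpr ⟨hs'.1 hys, hadj⟩)) hys
    have hper : ∀ u ∈ N, (((MISset G W).filter (fun s => u ∈ s)).card : ℝ)
        ≤ (3:ℝ) ^ (((W.card:ℝ) - (d+1))/3) := by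
      intro u huN
      have huW : u ∈ W := hNW huN
      set Nu : Finset α := insert u (W.filter (G.Adj u)) with hNu
      have hNuW : Nu ⊆ W := by
        intro x hx
        rcases Finset.mem_insert.mp hx with rfl | hx
        · exact huW
        · exact (Finset.mem_filter.mp hx).1
      set Wu : Finset α := W \ Nu with hWu
      have hmaps : ∀ s ∈ (MISset G W).filter (fun s => u ∈ s), s.erase u ∈ MISset G Wu := by
        intro s hsf
        obtain ⟨hs, hus⟩ := Finset.mem_filter.mp hsf
        obtain ⟨hsW, hind, hmax⟩ := mem_MISset.mp hs
        rw [mem_MISset]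
        refine ⟨?_, ?_, ?_⟩
        · intro x hx
          obtain ⟨hxu, hxs⟩ := Finset.mem_erase.mp hx
          rw [hWu, Finset.mem_sdiff]
          refine ⟨hsW hxs, ?_⟩
          intro hxNu
          rcases Finset.mem_insert.mp hxNu with rfl | hxf
          · exact hxu rfl
          · exact hind u hus x hxs (Finset.mem_filter.mp hxf).2
        · intro x hx y hy
          exact hind x (Finset.mem_of_mem_erase hx) y (Finset.mem_of_mem_erase hy)
        · intro w hw hwne
          rw [hWu, Finset.mem_sdiff] at hw
          obtain ⟨hwW, hwNu⟩ := hw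
          have hwu : w ≠ u := by rintro rfl; exact hwNu (Finset.mem_insert_self _ _)
          have hws : w ∉ s := fun hws => hwne (Finset.mem_erase.mpr ⟨hwu, hws⟩)
          obtain ⟨y, hys, hadj⟩ := hmax w hwW hws
          have hyu : y ≠ u := by
            rintro rfl
            exact hwNu (Finset.mem_insert_of_mem (Finset.mem_filter.mpr ⟨hwW, hadj.symm⟩))
          exact ⟨y, Finset.mem_erase.mpr ⟨hyu, hys⟩, hadj⟩
      have hinj : Set.InjOn (fun s : Finset α => s.erase u) (((MISset G W).filter (fun s => u ∈ s) : Finset (Finset α)) : Set (Finset α)) := by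
        intro s1 h1 s2 h2 he
        have hu1 : u ∈ s1 := (Finset.mem_filter.mp (Finset.mem_coe.mp h1)).2
        have hu2 : u ∈ s2 := (Finset.mem_filter.mp (Finset.mem_coe.mp h2)).2
        have : insert u (s1.erase u) = insert u (s2.erase u) := by
          simp only at he; rw [he]
        rwa [Finset.insert_erase hu1, Finset.insert_erase hu2] at this
      have hcard1 : ((MISset G W).filter (fun s => u ∈ s)).card ≤ (MISset G Wu).card :=
        Finset.card_le_card_of_injOn _ hmaps hinj
      have huWu : u ∉ Wu := by
        rw [hWu]; simp [Finset.mem_sdiff]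
        intro _; exact Finset.mem_insert_self _ _
      have hsub : Wu ⊂ W :=
        ⟨Finset.sdiff_subset, fun hWsub => huWu (hWsub huW)⟩
      have hIH := IH Wu hsub
      have hNucard : Nu.card = (W.filter (G.Adj u)).card + 1 := by
        rw [hNu, Finset.card_insert_of_notMem (by simp)]
      have hdle : d + 1 ≤ Nu.card := by
        rw [hNucard]
        exact Nat.add_le_add_right (hvmin u huW) 1
      have hNuWcard : Nu.card ≤ W.card := Finset.card_le_card hNuW
      have hWucard : Wu.card = W.card - Nu.card := Finset.card_sdiff_of_subset hNuW
      have hcard2 : (Wu.card : ℝ) ≤ (W.card : ℝ) - (d+1) := by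
        have : (Wu.card : ℝ) = (W.card : ℝ) - (Nu.card : ℝ) := by
          rw [hWucard, Nat.cast_sub hNuWcard]
        rw [this]
        have : ((d:ℝ) + 1) ≤ (Nu.card : ℝ) := by exact_mod_cast hdle
        linarith
      calc (((MISset G W).filter (fun s => u ∈ s)).card : ℝ)
          ≤ ((MISset G Wu).card : ℝ) := by exact_mod_cast hcard1
        _ ≤ (3:ℝ) ^ ((Wu.card:ℝ)/3) := hIH
        _ ≤ (3:ℝ) ^ (((W.card:ℝ) - (d+1))/3) := by
            apply Real.rpow_le_rpow_of_exponent_le (by norm_num)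
            linarith
    have hsum : ((MISset G W).card : ℝ)
        ≤ ∑ u ∈ N, (((MISset G W).filter (fun s => u ∈ s)).card : ℝ) := by
      have h1 : (MISset G W).card ≤ ∑ u ∈ N, ((MISset G W).filter (fun s => u ∈ s)).card :=
        le_trans (Finset.card_le_card hcover) (Finset.card_biUnion_le)
      exact_mod_cast h1
    have hfinal : ((MISset G W).card : ℝ) ≤ ((d:ℝ)+1) * (3:ℝ) ^ (((W.card:ℝ) - (d+1))/3) := by
      calc ((MISset G W).card : ℝ)
          ≤ ∑ u ∈ N, (((MISset G W).filter (fun s => u ∈ s)).card : ℝ) := hsum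
        _ ≤ ∑ _u ∈ N, (3:ℝ) ^ (((W.card:ℝ) - (d+1))/3) := Finset.sum_le_sum hper
        _ = (N.card : ℝ) * (3:ℝ) ^ (((W.card:ℝ) - (d+1))/3) := by
            rw [Finset.sum_const, nsmul_eq_mul]
        _ = ((d:ℝ)+1) * (3:ℝ) ^ (((W.card:ℝ) - (d+1))/3) := by
            rw [hNcard]; push_cast; ring
    have hk : ((d:ℝ)+1) ≤ (3:ℝ) ^ ((((d:ℝ)+1))/3) := by
      have := nat_le_rpow (d+1)
      push_cast at this
      exact this
    have hmul : (3:ℝ) ^ ((((d:ℝ)+1))/3) * (3:ℝ) ^ (((W.card:ℝ) - (d+1))/3)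
        = (3:ℝ) ^ ((W.card:ℝ)/3) := by
      rw [← Real.rpow_add (by norm_num : (0:ℝ) < 3)]
      congr 1; ring
    calc ((MISset G W).card : ℝ)
        ≤ ((d:ℝ)+1) * (3:ℝ) ^ (((W.card:ℝ) - (d+1))/3) := hfinal
      _ ≤ (3:ℝ) ^ ((((d:ℝ)+1))/3) * (3:ℝ) ^ (((W.card:ℝ) - (d+1))/3) :=
          mul_le_mul_of_nonneg_right hk (Real.rpow_nonneg (by norm_num) _)
      _ = _ := hmul

end MoonMoser
section TwoSAT
variable {V : Type*} [DecidableEq V] {F : CNF2 V} {ρ ρ₁ ρ₂ : V → Option Bool}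

lemma litVal_true_iff {ρ : V → Option Bool} {l : Lit V} :
    litVal ρ l = some true ↔ ρ l.1 = some l.2 := by
  unfold litVal
  cases h : ρ l.1 <;> simp

lemma litVal_neg (ρ : V → Option Bool) (l : Lit V) :
    litVal ρ (negLit l) = Option.map (fun b => !b) (litVal ρ l) := by
  unfold litVal negLit
  rcases h : ρ l.1 with _ | a
  · simp
  · simp only [Option.map_some]
    congr 1
    cases a <;> cases l.2 <;> rfl

lemma litVal_neg_true {ρ : V → Option Bool} {l : Lit V} :
    litVal ρ (negLit l) = some true ↔ litVal ρ l = some false := by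
  rw [litVal_neg]
  cases h : litVal ρ l with
  | none => simp
  | some b => cases b <;> simp

lemma litVal_none_iff {ρ : V → Option Bool} {l : Lit V} :
    litVal ρ l = none ↔ ρ l.1 = none := by
  unfold litVal
  cases h : ρ l.1 <;> simp

lemma eq_negLit_iff {a b : Lit V} : b = negLit a ↔ b.1 = a.1 ∧ b.2 = !a.2 := by
  simp [negLit, Prod.ext_iff]

lemma bool_eq_or_eq_not (a b : Bool) : a = b ∨ a = !b := by
  cases a <;> cases b <;> simp

lemma no_taut (hac : acyclicD F) {c : Clause2 V} (hc : c ∈ F) : c.2 ≠ negLit c.1 := by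
  intro h
  exact hac (negLit c.1) (Relation.TransGen.single ⟨c, hc, Or.inl ⟨rfl, h.symm⟩⟩)

def coversC (ρ : V → Option Bool) (c : Clause2 V) : Prop :=
  litVal ρ c.1 = some true ∨ litVal ρ c.2 = some true

lemma implicant_iff (hac : acyclicD F) (ρ : V → Option Bool) :
    implicant2 ρ F ↔ ∀ c ∈ F, coversC ρ c := by
  constructor
  · intro h c hc
    by_contra hcov
    simp only [coversC, not_or] at hcov
    obtain ⟨h1, h2⟩ := hcov
    set α : V → Bool := fun v =>
      match ρ v with
      | some b => b
      | none => if v = c.1.1 then !c.1.2 else if v = c.2.1 then !c.2.2 else false with hα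
    have hext : extendsR α ρ := by
      intro v b hv
      simp [hα, hv]
    have hsat := h α hext c hc
    have e1 : evalLit α c.1 = false := by
      unfold evalLit
      rcases hv : ρ c.1.1 with _ | a
      · simp [hα, hv]
      · have ha : (a == c.1.2) = false := by
          rcases Bool.eq_false_or_eq_true (a == c.1.2) with h' | h'
          · exfalso; apply h1; simp [litVal, hv, h']
          · exact h'
        simp [hα, hv, ha]
    have e2 : evalLit α c.2 = false := by
      unfold evalLit
      rcases hv : ρ c.2.1 with _ | a
      · by_cases hsame : c.2.1 = c.1.1
        · have hv1 : ρ c.1.1 = none := hsame ▸ hv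
          have hbb : c.2.2 = c.1.2 := by
            rcases bool_eq_or_eq_not c.2.2 c.1.2 with h' | h'
            · exact h'
            · exact absurd (eq_negLit_iff.mpr ⟨hsame, h'⟩) (no_taut hac hc)
          rw [hsame]
          simp [hα, hv1, hbb]
        · simp [hα, hv, hsame]
      · have ha : (a == c.2.2) = false := by
          rcases Bool.eq_false_or_eq_true (a == c.2.2) with h' | h'
          · exfalso; apply h2; simp [litVal, hv, h']
          · exact h'
        simp [hα, hv, ha]
    rw [e1, e2] at hsat
    simp at hsat
  · intro h α hα c hc
    rcases h c hc with h1 | h1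
    · left
      unfold evalLit
      rw [hα _ _ (litVal_true_iff.mp h1)]
      simp
    · right
      unfold evalLit
      rw [hα _ _ (litVal_true_iff.mp h1)]
      simp

lemma litVal_unfix (ρ : V → Option Bool) (v : V) (l : Lit V) :
    litVal (unfix ρ v) l = if l.1 = v then none else litVal ρ l := by
  unfold litVal unfix
  rw [Function.update_apply]
  split <;> simp

lemma prime_witness (hac : acyclicD F) (hpi : primeImplicant2 ρ F) {l : Lit V}
    (hl : litVal ρ l = some true) :
    ∃ c ∈ F, (c.1 = l ∧ c.2 = l)
      ∨ (c.1 = l ∧ c.2.1 ≠ l.1 ∧ litVal ρ c.2 ≠ some true)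
      ∨ (c.2 = l ∧ c.1.1 ≠ l.1 ∧ litVal ρ c.1 ≠ some true) := by
  have hv : ρ l.1 = some l.2 := litVal_true_iff.mp hl
  have hnone : ρ l.1 ≠ none := by simp [hv]
  have hnimp := hpi.2 l.1 hnone
  rw [implicant_iff hac] at hnimp
  push_neg at hnimp
  obtain ⟨c, hc, hcov⟩ := hnimp
  simp only [coversC, not_or] at hcov
  obtain ⟨hc1, hc2⟩ := hcov
  rw [litVal_unfix] at hc1 hc2
  refine ⟨c, hc, ?_⟩
  have hcov0 : coversC ρ c := (implicant_iff hac ρ).mp hpi.1 c hc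
  rcases hcov0 with h1 | h1
  · have hv1 : c.1.1 = l.1 := by
      by_contra hne
      rw [if_neg hne] at hc1
      exact hc1 h1
    have hc12 : c.1.2 = l.2 := by
      have h' := litVal_true_iff.mp h1
      rw [hv1, hv] at h'
      exact (Option.some.inj h').symm
    have hceq : c.1 = l := Prod.ext hv1 hc12
    by_cases h2v : c.2.1 = l.1
    · by_cases hb : c.2.2 = l.2
      · exact Or.inl ⟨hceq, Prod.ext h2v hb⟩
      · exfalso
        apply no_taut hac hc
        have hb' : c.2.2 = !c.1.2 := by
          rcases bool_eq_or_eq_not c.2.2 c.1.2 with h' | h'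
          · exact absurd (h'.trans hc12) hb
          · exact h'
        exact eq_negLit_iff.mpr ⟨h2v.trans hv1.symm, hb'⟩
    · rw [if_neg h2v] at hc2
      exact Or.inr (Or.inl ⟨hceq, h2v, hc2⟩)
  · have hv2 : c.2.1 = l.1 := by
      by_contra hne
      rw [if_neg hne] at hc2
      exact hc2 h1
    have hc22 : c.2.2 = l.2 := by
      have h' := litVal_true_iff.mp h1
      rw [hv2, hv] at h'
      exact (Option.some.inj h').symm
    have hceq : c.2 = l := Prod.ext hv2 hc22
    by_cases h1v : c.1.1 = l.1
    · by_cases hb : c.1.2 = l.2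
      · exact Or.inl ⟨Prod.ext h1v hb, hceq⟩
      · exfalso
        apply no_taut hac hc
        have hb' : c.2.2 = !c.1.2 := by
          rcases bool_eq_or_eq_not c.2.2 c.1.2 with h' | h'
          · exact absurd (hc22.symm.trans h') (fun h'' => hb h''.symm)
          · exact h'
        exact eq_negLit_iff.mpr ⟨hv2.trans h1v.symm, hb'⟩
    · rw [if_neg h1v] at hc1
      exact Or.inr (Or.inr ⟨hceq, h1v, hc1⟩)

lemma edge_wf [Finite V] (hac : acyclicD F) : WellFounded (edge F) := by
  haveI : IsTrans (Lit V) (Relation.TransGen (edge F)) := ⟨fun _ _ _ => Relation.TransGen.trans⟩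
  haveI : IsIrrefl (Lit V) (Relation.TransGen (edge F)) := ⟨hac⟩
  exact Subrelation.wf (fun h => Relation.TransGen.single h)
    (Finite.wellFounded_of_trans_of_irrefl _)

lemma litVal_some_false {ρ : V → Option Bool} {l : Lit V}
    (h : litVal ρ l ≠ some true) (h' : litVal ρ l ≠ none) :
    litVal ρ (negLit l) = some true := by
  rw [litVal_neg_true]
  rcases hx : litVal ρ l with _ | b
  · exact absurd hx h'
  · cases b
    · rfl
    · exact absurd hx h

lemma pi_determined [Finite V] (hac : acyclicD F)
    (h1 : primeImplicant2 ρ₁ F) (h2 : implicant2 ρ₂ F)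
    (hdom : ∀ v, ρ₁ v = none → ρ₂ v = none) :
    ∀ l : Lit V, litVal ρ₁ l = some true → litVal ρ₂ l = some true := by
  intro l
  refine (edge_wf hac).induction
    (C := fun l => litVal ρ₁ l = some true → litVal ρ₂ l = some true) l ?_
  intro x IH hx
  obtain ⟨c, hc, hcase⟩ := prime_witness hac h1 hx
  have hcov2 : coversC ρ₂ c := (implicant_iff hac ρ₂).mp h2 c hc
  rcases hcase with ⟨he1, he2⟩ | ⟨he1, hne, hnt⟩ | ⟨he2, hne, hnt⟩
  · rcases hcov2 with h | h
    · rwa [he1] at h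
    · rwa [he2] at h
  · have h2nt : litVal ρ₂ c.2 ≠ some true := by
      rcases hv : ρ₁ c.2.1 with _ | a
      · have hd := hdom _ hv
        simp [litVal_true_iff, hd]
      · have hnn : litVal ρ₁ c.2 ≠ none := by simp [litVal_none_iff, hv]
        have hnegt := litVal_some_false hnt hnn
        have hedge : edge F (negLit c.2) x := ⟨c, hc, Or.inr ⟨rfl, he1.symm⟩⟩
        have h2neg := IH _ hedge hnegt
        rw [litVal_neg_true] at h2neg
        rw [h2neg]
        simp
    rcases hcov2 with h | h
    · rwa [he1] at h
    · exact absurd h h2nt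
  · have h1nt : litVal ρ₂ c.1 ≠ some true := by
      rcases hv : ρ₁ c.1.1 with _ | a
      · have hd := hdom _ hv
        simp [litVal_true_iff, hd]
      · have hnn : litVal ρ₁ c.1 ≠ none := by simp [litVal_none_iff, hv]
        have hnegt := litVal_some_false hnt hnn
        have hedge : edge F (negLit c.1) x := ⟨c, hc, Or.inl ⟨rfl, he2.symm⟩⟩
        have h2neg := IH _ hedge hnegt
        rw [litVal_neg_true] at h2neg
        rw [h2neg]
        simp
    rcases hcov2 with h | h
    · exact absurd h h1nt
    · rwa [he2] at h

lemma pi_unique [Finite V] (hac : acyclicD F)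
    (h1 : primeImplicant2 ρ₁ F) (h2 : primeImplicant2 ρ₂ F)
    (hdom : ∀ v, ρ₁ v = none ↔ ρ₂ v = none) : ρ₁ = ρ₂ := by
  funext v
  rcases hv : ρ₁ v with _ | b
  · rw [(hdom v).mp hv]
  · have ht : litVal ρ₁ (v, b) = some true := by
      rw [litVal_true_iff]; exact hv
    have h2t := pi_determined hac h1 h2.1 (fun w hw => (hdom w).mp hw) _ ht
    rw [litVal_true_iff] at h2t
    exact h2t.symm

inductive Forced (F : CNF2 V) : Lit V → Prop
  | base {c : Clause2 V} : c ∈ F → c.1 = c.2 → Forced F c.1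
  | step {u v : Lit V} : Forced F u → edge F u v → Forced F v

lemma litVal_neg_of_true {ρ : V → Option Bool} {l : Lit V}
    (h : litVal ρ l = some true) : litVal ρ (negLit l) = some false := by
  rw [litVal_neg, h]
  rfl

lemma negLit_negLit (l : Lit V) : negLit (negLit l) = l := by
  simp [negLit]

lemma forced_true (hac : acyclicD F) (himp : implicant2 ρ F) :
    ∀ l, Forced F l → litVal ρ l = some true := by
  intro l hF
  induction hF with
  | base hc he =>
    rcases (implicant_iff hac ρ).mp himp _ hc with h | h
    · exact h
    · rw [he]; exact h
  | @step u v hu he IH =>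
    obtain ⟨c, hc, hor⟩ := he
    rcases hor with ⟨hu', hv'⟩ | ⟨hu', hv'⟩
    · rcases (implicant_iff hac ρ).mp himp c hc with h | h
      · exfalso
        have hc1 : c.1 = negLit u := by rw [hu', negLit_negLit]
        rw [hc1, litVal_neg_of_true IH] at h
        simp at h
      · rw [hv']; exact h
    · rcases (implicant_iff hac ρ).mp himp c hc with h | h
      · rw [hv']; exact h
      · exfalso
        have hc2 : c.2 = negLit u := by rw [hu', negLit_negLit]
        rw [hc2, litVal_neg_of_true IH] at h
        simp at h

lemma fixed_forced_or_free [Finite V] (hac : acyclicD F) (hpi : primeImplicant2 ρ F) :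
    ∀ l : Lit V, litVal ρ l = some true →
      Forced F l ∨ ∃ u : Lit V, litVal ρ u = none ∧ impliesL F u l := by
  intro l
  refine (edge_wf hac).induction
    (C := fun l => litVal ρ l = some true →
      Forced F l ∨ ∃ u : Lit V, litVal ρ u = none ∧ impliesL F u l) l ?_
  intro x IH hx
  obtain ⟨c, hc, hcase⟩ := prime_witness hac hpi hx
  rcases hcase with ⟨he1, he2⟩ | ⟨he1, hne, hnt⟩ | ⟨he2, hne, hnt⟩
  · left
    have := Forced.base (F := F) hc (he1.trans he2.symm)
    rwa [he1] at this
  · have hedge : edge F (negLit c.2) x := ⟨c, hc, Or.inr ⟨rfl, he1.symm⟩⟩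
    rcases hv : ρ c.2.1 with _ | a
    · right
      refine ⟨negLit c.2, ?_, Relation.TransGen.single hedge⟩
      rw [litVal_none_iff]
      exact hv
    · have hnn : litVal ρ c.2 ≠ none := by simp [litVal_none_iff, hv]
      have hnegt := litVal_some_false hnt hnn
      rcases IH _ hedge hnegt with hf | ⟨u, hu, himpl⟩
      · left; exact Forced.step hf hedge
      · right; exact ⟨u, hu, himpl.tail hedge⟩
  · have hedge : edge F (negLit c.1) x := ⟨c, hc, Or.inl ⟨rfl, he2.symm⟩⟩
    rcases hv : ρ c.1.1 with _ | a
    · right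
      refine ⟨negLit c.1, ?_, Relation.TransGen.single hedge⟩
      rw [litVal_none_iff]
      exact hv
    · have hnn : litVal ρ c.1 ≠ none := by simp [litVal_none_iff, hv]
      have hnegt := litVal_some_false hnt hnn
      rcases IH _ hedge hnegt with hf | ⟨u, hu, himpl⟩
      · left; exact Forced.step hf hedge
      · right; exact ⟨u, hu, himpl.tail hedge⟩

lemma edge_true (hac : acyclicD F) (himp : implicant2 ρ F) {u v : Lit V}
    (he : edge F u v) (hu : litVal ρ u ≠ some false) : litVal ρ v = some true := by
  obtain ⟨c, hc, hor⟩ := he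
  rcases hor with ⟨hu', hv'⟩ | ⟨hu', hv'⟩
  · rcases (implicant_iff hac ρ).mp himp c hc with h | h
    · exfalso
      have hc1 : c.1 = negLit u := by rw [hu', negLit_negLit]
      rw [hc1, litVal_neg_true] at h
      exact hu h
    · rw [hv']; exact h
  · rcases (implicant_iff hac ρ).mp himp c hc with h | h
    · rw [hv']; exact h
    · exfalso
      have hc2 : c.2 = negLit u := by rw [hu', negLit_negLit]
      rw [hc2, litVal_neg_true] at h
      exact hu h

lemma impliesL_true (hac : acyclicD F) (himp : implicant2 ρ F) {u v : Lit V}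
    (h : impliesL F u v) (hu : litVal ρ u ≠ some false) : litVal ρ v = some true := by
  induction h with
  | single he => exact edge_true hac himp he hu
  | tail _ he IH => exact edge_true hac himp he (by rw [IH]; simp)

end TwoSAT
theorem partial_prime_implicant_count {n : ℕ} (F : CNF2 (Fin n)) (hac : acyclicD F) :
    ({ρ : Fin n → Option Bool | partialPI ρ F}.ncard : ℝ) ≤ (3 : ℝ) ^ ((n : ℝ) / 3) := by
  classical
  set G : SimpleGraph (Fin n) :=
    { Adj := adjVar F
      symm := by
        refine ⟨?_⟩
        rintro x y ⟨hne, u, v, hu, hv, hor⟩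
        exact ⟨hne.symm, v, u, hv, hu, hor.symm⟩
      loopless := by
        refine ⟨?_⟩
        rintro x ⟨hne, -⟩
        exact hne rfl } with hG
  set W : Finset (Fin n) := Finset.univ.filter (fun v => ∀ b, ¬ Forced F (v, b)) with hW
  set Φ : (Fin n → Option Bool) → Finset (Fin n) :=
    fun ρ => Finset.univ.filter (fun v => ρ v = none) with hΦ
  have hmem : ∀ ρ v, v ∈ Φ ρ ↔ ρ v = none := by
    intro ρ v; simp [hΦ]
  have hmaps : ∀ ρ ∈ {ρ : Fin n → Option Bool | partialPI ρ F},
      Φ ρ ∈ ((MISset G W : Finset (Finset (Fin n))) : Set (Finset (Fin n))) := by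
    intro ρ hρ
    obtain ⟨hpi, -⟩ := hρ
    rw [Finset.mem_coe, mem_MISset]
    refine ⟨?_, ?_, ?_⟩
    · intro x hx
      rw [hmem] at hx
      rw [hW, Finset.mem_filter]
      refine ⟨Finset.mem_univ _, ?_⟩
      intro b hF
      have ht := forced_true hac hpi.1 _ hF
      rw [litVal_true_iff] at ht
      rw [hx] at ht
      exact nomatch ht
    · intro x hx y hy hadj
      rw [hmem] at hx hy
      obtain ⟨hne, u, v, hu, hv, hor⟩ := hadj
      rcases hor with h | h
      · have hnf : litVal ρ u ≠ some false := by
          rw [litVal_none_iff.mpr (by rw [hu]; exact hx)]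
          simp
        have := impliesL_true hac hpi.1 h hnf
        rw [litVal_true_iff, hv, hy] at this
        exact nomatch this
      · have hnf : litVal ρ v ≠ some false := by
          rw [litVal_none_iff.mpr (by rw [hv]; exact hy)]
          simp
        have := impliesL_true hac hpi.1 h hnf
        rw [litVal_true_iff, hu, hx] at this
        exact nomatch this
    · intro w hwW hwns
      rw [hmem] at hwns
      rcases hb : ρ w with _ | b
      · exact absurd hb hwns
      · have hx : litVal ρ (w, b) = some true := by rw [litVal_true_iff]; exact hb
        rcases fixed_forced_or_free hac hpi _ hx with hF | ⟨u, hu, himp⟩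
        · exfalso
          rw [hW, Finset.mem_filter] at hwW
          exact hwW.2 b hF
        · have hufree : ρ u.1 = none := litVal_none_iff.mp hu
          refine ⟨u.1, ?_, ?_⟩
          · rw [hmem]; exact hufree
          · show adjVar F w u.1
            refine ⟨?_, (w, b), u, rfl, rfl, Or.inr himp⟩
            rintro rfl
            rw [hufree] at hb
            exact nomatch hb
  have hinj : Set.InjOn Φ {ρ : Fin n → Option Bool | partialPI ρ F} := by
    intro ρ₁ h1 ρ₂ h2 he
    apply pi_unique hac h1.1 h2.1
    intro v
    constructor
    · intro hv
      have : v ∈ Φ ρ₁ := (hmem _ _).mpr hv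
      rw [he] at this
      exact (hmem _ _).mp this
    · intro hv
      have : v ∈ Φ ρ₂ := (hmem _ _).mpr hv
      rw [← he] at this
      exact (hmem _ _).mp this
  have h1 : ({ρ : Fin n → Option Bool | partialPI ρ F}.ncard : ℝ)
      ≤ ((MISset G W).card : ℝ) := by
    have := Set.ncard_le_ncard_of_injOn Φ hmaps hinj (Set.toFinite _)
    rw [Set.ncard_coe_finset] at this
    exact_mod_cast this
  have h2 := MM G W
  have h3 : (3:ℝ) ^ ((W.card : ℝ)/3) ≤ (3:ℝ) ^ ((n:ℝ)/3) := by
    apply Real.rpow_le_rpow_of_exponent_le (by norm_num)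
    have hcard : W.card ≤ n := by
      have := Finset.card_le_card (Finset.subset_univ W)
      simpa using this
    have : (W.card : ℝ) ≤ (n : ℝ) := by exact_mod_cast hcard
    linarith
  linarith
end
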